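/- arXiv:2109.14255 — 2 statements merged into one kernel-verified Lean document; each statement's English description precedes it below -/
import Mathlib

section
/- Let α < 0 < β, γ ∈ ℝ, N ≥ 1 with N + γ > 0 and N + γ + αβ < 0, and set h(r) = r^γ(1+r^β)^α. Then the total mass H₁ = |S^{N-1}| ∫_0^∞ r^{N-1} h(r) dr is finite, and any median η of the measure r^{N-1}h(r)dr (i.e. ∫_0^η r^{N-1}h(r)dr = (1/2)∫_0^∞ r^{N-1}h(r)dr) satisfies ( (N+γ) / (2^{|α|+1} |N+γ+αβ|) )^{1/(N+γ)} ≤ η ≤ 2^{(|α|+1)/|N+γ+αβ|}. -/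
open MeasureTheory

/-- Estimates on the median of the radial measure `r^{N-1+γ}(1+r^β)^α dr`:
the total mass is finite and any median `η` satisfies
`((N+γ)/(2^{|α|+1}|N+γ+αβ|))^{1/(N+γ)} ≤ η ≤ 2^{(|α|+1)/|N+γ+αβ|}`. -/
theorem median_estimate
    (N : ℕ) (α β γ : ℝ) (hN : 1 ≤ N)
    (hα : α < 0) (hβ : 0 < β)
    (h1 : 0 < (N : ℝ) + γ) (h2 : (N : ℝ) + γ + α * β < 0)
    (η : ℝ) (hη0 : 0 ≤ η)
    (hmed : ∫ r in Set.Ioc 0 η, r ^ ((N : ℝ) - 1 + γ) * (1 + r ^ β) ^ α =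
      (1 / 2) * ∫ r in Set.Ioi (0 : ℝ), r ^ ((N : ℝ) - 1 + γ) * (1 + r ^ β) ^ α) :
    IntegrableOn (fun r : ℝ => r ^ ((N : ℝ) - 1 + γ) * (1 + r ^ β) ^ α)
      (Set.Ioi (0 : ℝ)) ∧
    (((N : ℝ) + γ) / (2 ^ (|α| + 1) * |(N : ℝ) + γ + α * β|)) ^ (1 / ((N : ℝ) + γ)) ≤ η ∧
    η ≤ 2 ^ ((|α| + 1) / |(N : ℝ) + γ + α * β|) := by
  set p : ℝ := (N : ℝ) - 1 + γ with hp_def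
  set q : ℝ := (N : ℝ) - 1 + γ + α * β with hq_def
  set f : ℝ → ℝ := fun r : ℝ => r ^ p * (1 + r ^ β) ^ α with hf_def
  have hp1 : p + 1 = (N : ℝ) + γ := by ring
  have hq1 : q + 1 = (N : ℝ) + γ + α * β := by ring
  have hp : -1 < p := by linarith
  have hq : q < -1 := by rw [hq_def]; linarith
  have hK : (0:ℝ) < -(q + 1) := by rw [hq1]; linarith
  have hq1ne : q + 1 ≠ 0 := by linarith
  have hp1pos : (0:ℝ) < p + 1 := by rw [hp1]; exact h1
  -- measurability
  have hf_meas : Measurable f := by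
    rw [hf_def]; fun_prop
  -- nonnegativity on positive reals
  have hnn : ∀ r : ℝ, 0 < r → 0 ≤ f r := fun r hr =>
    mul_nonneg (Real.rpow_nonneg hr.le p)
      (Real.rpow_nonneg (by positivity) α)
  -- f ≤ r^p on positive reals
  have hle1 : ∀ r : ℝ, 0 < r → f r ≤ r ^ p := by
    intro r hr
    have h1r : (1:ℝ) ≤ 1 + r ^ β := by
      have := Real.rpow_nonneg hr.le β; linarith
    have : (1 + r ^ β) ^ α ≤ 1 :=
      Real.rpow_le_one_of_one_le_of_nonpos h1r hα.le
    calc f r ≤ r ^ p * 1 := by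
          exact mul_le_mul_of_nonneg_left this (Real.rpow_nonneg hr.le p)
      _ = r ^ p := mul_one _
  -- f ≤ r^q on positive reals
  have hle2 : ∀ r : ℝ, 0 < r → f r ≤ r ^ q := by
    intro r hr
    have hrb : (0:ℝ) < r ^ β := Real.rpow_pos_of_pos hr β
    have hba : (1 + r ^ β) ^ α ≤ (r ^ β) ^ α :=
      Real.rpow_le_rpow_of_nonpos hrb (by linarith) hα.le
    have hh2 : (r ^ β) ^ α = r ^ (α * β) := by
      rw [mul_comm α β, Real.rpow_mul hr.le]
    calc f r ≤ r ^ p * r ^ (α * β) := by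
          rw [← hh2]
          exact mul_le_mul_of_nonneg_left hba (Real.rpow_nonneg hr.le p)
      _ = r ^ q := by rw [← Real.rpow_add hr, hq_def]
  -- f ≥ 2^α r^q for r ≥ 1
  have hge : ∀ r : ℝ, 1 ≤ r → 2 ^ α * r ^ q ≤ f r := by
    intro r hr
    have hr0 : (0:ℝ) < r := lt_of_lt_of_le one_pos hr
    have hrb1 : (1:ℝ) ≤ r ^ β := Real.one_le_rpow hr hβ.le
    have hle : 1 + r ^ β ≤ 2 * r ^ β := by linarith
    have h01 : (0:ℝ) < 1 + r ^ β := by linarith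
    have hstep : (2 * r ^ β) ^ α ≤ (1 + r ^ β) ^ α :=
      Real.rpow_le_rpow_of_nonpos h01 hle hα.le
    have hmul : (2 * r ^ β) ^ α = 2 ^ α * r ^ (α * β) := by
      rw [Real.mul_rpow (by norm_num) (by positivity), mul_comm α β, Real.rpow_mul hr0.le]
    calc 2 ^ α * r ^ q = r ^ p * (2 ^ α * r ^ (α * β)) := by
          rw [hq_def, show (N:ℝ) - 1 + γ + α * β = p + α * β from rfl,
            Real.rpow_add hr0]; ring
      _ ≤ r ^ p * (1 + r ^ β) ^ α := by
          rw [← hmul]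
          exact mul_le_mul_of_nonneg_left hstep (Real.rpow_nonneg hr0.le p)
      _ = f r := rfl
  -- integrability of r^p on Ioc 0 c
  have hip : ∀ c : ℝ, 0 ≤ c → IntegrableOn (fun r : ℝ => r ^ p) (Set.Ioc 0 c) := by
    intro c hc
    exact (intervalIntegrable_iff_integrableOn_Ioc_of_le hc).mp
      (intervalIntegral.intervalIntegrable_rpow' hp)
  -- integrability of f on Ioc 0 c
  have hiIoc : ∀ c : ℝ, 0 ≤ c → IntegrableOn f (Set.Ioc 0 c) := by
    intro c hc
    refine Integrable.mono (hip c hc) hf_meas.aestronglyMeasurable ?_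
    filter_upwards [ae_restrict_mem measurableSet_Ioc] with r hr
    rw [Real.norm_eq_abs, Real.norm_eq_abs, abs_of_nonneg (hnn r hr.1),
      abs_of_nonneg (Real.rpow_nonneg hr.1.le p)]
    exact hle1 r hr.1
  -- integrability of f on Ioi c for c > 0
  have hiIoi : ∀ c : ℝ, 0 < c → IntegrableOn f (Set.Ioi c) := by
    intro c hc
    refine Integrable.mono (integrableOn_Ioi_rpow_of_lt hq hc) hf_meas.aestronglyMeasurable ?_
    filter_upwards [ae_restrict_mem measurableSet_Ioi] with r hr
    have hr0 : (0:ℝ) < r := hc.trans hr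
    rw [Real.norm_eq_abs, Real.norm_eq_abs, abs_of_nonneg (hnn r hr0),
      abs_of_nonneg (Real.rpow_nonneg hr0.le q)]
    exact hle2 r hr0
  have hInt : IntegrableOn f (Set.Ioi (0:ℝ)) := by
    rw [← Set.Ioc_union_Ioi_eq_Ioi (zero_le_one (α := ℝ))]
    exact (hiIoc 1 zero_le_one).union (hiIoi 1 one_pos)
  refine ⟨hInt, ?_⟩
  -- lower bound for total mass
  set I : ℝ := ∫ r in Set.Ioi (0:ℝ), f r with hI_def
  have hIq : ∫ r in Set.Ioi (1:ℝ), (2:ℝ) ^ α * r ^ q = 2 ^ α * (-(1:ℝ) / (q + 1)) := by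
    rw [MeasureTheory.integral_const_mul, integral_Ioi_rpow_of_lt hq one_pos, Real.one_rpow]
  have hI_lb : 2 ^ α * (-(1:ℝ) / (q + 1)) ≤ I := by
    have step1 : ∫ r in Set.Ioi (1:ℝ), (2:ℝ) ^ α * r ^ q ≤ ∫ r in Set.Ioi (1:ℝ), f r := by
      refine setIntegral_mono_on
        ((integrableOn_Ioi_rpow_of_lt hq one_pos).const_mul _) (hiIoi 1 one_pos)
        measurableSet_Ioi ?_
      intro r hr
      exact hge r (le_of_lt hr)
    have step2 : ∫ r in Set.Ioi (1:ℝ), f r ≤ I := by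
      refine setIntegral_mono_set hInt ?_ ?_
      · filter_upwards [ae_restrict_mem measurableSet_Ioi] with r hr
        exact hnn r hr
      · exact HasSubset.Subset.eventuallyLE (Set.Ioi_subset_Ioi zero_le_one)
    rw [← hIq]; exact step1.trans step2
  have hclb : 0 < (1/2) * ((2:ℝ) ^ α * (-(1:ℝ) / (q + 1))) := by
    have h2a : (0:ℝ) < 2 ^ α := Real.rpow_pos_of_pos two_pos α
    have : (0:ℝ) < -(1:ℝ) / (q + 1) := by
      rw [neg_div, neg_pos]
      exact div_neg_of_pos_of_neg one_pos (by linarith)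
    positivity
  -- left integral upper bound
  have hleft : ∫ r in Set.Ioc (0:ℝ) η, f r ≤ η ^ (p + 1) / (p + 1) := by
    have step1 : ∫ r in Set.Ioc (0:ℝ) η, f r ≤ ∫ r in Set.Ioc (0:ℝ) η, r ^ p := by
      refine setIntegral_mono_on (hiIoc η hη0) (hip η hη0) measurableSet_Ioc ?_
      intro r hr
      exact hle1 r hr.1
    have hval : ∫ r in Set.Ioc (0:ℝ) η, r ^ p = η ^ (p + 1) / (p + 1) := by
      rw [← intervalIntegral.integral_of_le hη0, integral_rpow (Or.inl hp),
        Real.zero_rpow (by linarith : p + 1 ≠ 0)]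
      ring
    linarith [step1, hval.le, hval.ge]
  have hb : (0:ℝ) < 2 ^ (-α + 1) := Real.rpow_pos_of_pos two_pos _
  have e3 : (2:ℝ) ^ α * 2 ^ (-α + 1) = 2 := by
    rw [← Real.rpow_add two_pos]; norm_num
  have hc : (1/2) * ((2:ℝ) ^ α * (-(1:ℝ) / (q + 1))) * ((2:ℝ) ^ (-α+1) * -(q+1)) = 1 := by
    have hone : (-(1:ℝ)/(q+1)) * -(q+1) = 1 := by field_simp
    calc (1/2) * ((2:ℝ) ^ α * (-(1:ℝ) / (q + 1))) * ((2:ℝ) ^ (-α+1) * -(q+1))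
        = ((2:ℝ) ^ α * 2 ^ (-α+1)) * ((1/2) * ((-(1:ℝ)/(q+1)) * -(q+1))) := by ring
      _ = 2 * ((1/2) * 1) := by rw [e3, hone]
      _ = 1 := by norm_num
  -- derive lower bound on η
  have hmed' : (1/2) * I ≤ η ^ (p + 1) / (p + 1) := by
    rw [← hmed]; exact hleft
  have h3 : (1/2) * ((2:ℝ) ^ α * (-(1:ℝ) / (q + 1))) ≤ η ^ (p + 1) / (p + 1) :=
    le_trans (mul_le_mul_of_nonneg_left hI_lb (by norm_num)) hmed'
  have hηlow : (((N : ℝ) + γ) / (2 ^ (|α| + 1) * |(N : ℝ) + γ + α * β|)) ^ (1 / ((N : ℝ) + γ))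
      ≤ η := by
    have key : ((N : ℝ) + γ) / (2 ^ (|α| + 1) * |(N : ℝ) + γ + α * β|) ≤ η ^ ((N:ℝ) + γ) := by
      have e1 : |α| + 1 = -α + 1 := by rw [abs_of_neg hα]
      have e2 : |(N : ℝ) + γ + α * β| = -(q+1) := by rw [← hq1, abs_of_neg (by linarith)]
      rw [e1, e2, ← hp1, div_le_iff₀ (mul_pos hb hK)]
      calc p + 1
          = ((1/2) * ((2:ℝ) ^ α * (-(1:ℝ)/(q+1))) * ((2:ℝ)^(-α+1) * -(q+1))) * (p+1) := by
            rw [hc]; ring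
        _ = ((1/2) * ((2:ℝ) ^ α * (-(1:ℝ)/(q+1)))) * ((p+1) * ((2:ℝ)^(-α+1) * -(q+1))) := by
            ring
        _ ≤ (η^(p+1)/(p+1)) * ((p+1) * ((2:ℝ)^(-α+1) * -(q+1))) :=
            mul_le_mul_of_nonneg_right h3
              (le_of_lt (mul_pos hp1pos (mul_pos hb hK)))
        _ = η^(p+1) * ((2:ℝ)^(-α+1) * -(q+1)) := by
            field_simp
    have hA : (0:ℝ) < ((N : ℝ) + γ) / (2 ^ (|α| + 1) * |(N : ℝ) + γ + α * β|) := by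
      apply div_pos h1
      apply mul_pos (Real.rpow_pos_of_pos two_pos _)
      rw [abs_of_neg h2]; linarith
    calc (((N : ℝ) + γ) / (2 ^ (|α| + 1) * |(N : ℝ) + γ + α * β|)) ^ (1 / ((N : ℝ) + γ))
        ≤ (η ^ ((N:ℝ) + γ)) ^ (1 / ((N : ℝ) + γ)) :=
          Real.rpow_le_rpow hA.le key (by positivity)
      _ = η := by
          rw [← Real.rpow_mul hη0, mul_one_div, div_self (ne_of_gt h1), Real.rpow_one]
  refine ⟨hηlow, ?_⟩
  -- η is positive
  have hηpos : 0 < η := by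
    have hA : (0:ℝ) < ((N : ℝ) + γ) / (2 ^ (|α| + 1) * |(N : ℝ) + γ + α * β|) := by
      apply div_pos h1
      apply mul_pos (Real.rpow_pos_of_pos two_pos _)
      rw [abs_of_neg h2]; linarith
    calc (0:ℝ) < (((N : ℝ) + γ) / (2 ^ (|α| + 1) * |(N : ℝ) + γ + α * β|)) ^ (1 / ((N : ℝ) + γ)) :=
          Real.rpow_pos_of_pos hA _
      _ ≤ η := hηlow
  -- splitting
  have hsplit : I = (∫ r in Set.Ioc (0:ℝ) η, f r) + ∫ r in Set.Ioi η, f r := by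
    rw [hI_def, ← Set.Ioc_union_Ioi_eq_Ioi hη0]
    exact setIntegral_union Set.Ioc_disjoint_Ioi_same measurableSet_Ioi
      (hiIoc η hη0) (hiIoi η hηpos)
  have htail : ∫ r in Set.Ioi η, f r = (1/2) * I := by
    have h5 : (∫ r in Set.Ioc (0:ℝ) η, f r) = (1/2) * I := hmed
    linarith [hsplit]
  -- tail upper bound
  have htail_ub : ∫ r in Set.Ioi η, f r ≤ -η ^ (q + 1) / (q + 1) := by
    have step1 : ∫ r in Set.Ioi η, f r ≤ ∫ r in Set.Ioi η, r ^ q := by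
      refine setIntegral_mono_on (hiIoi η hηpos) (integrableOn_Ioi_rpow_of_lt hq hηpos)
        measurableSet_Ioi ?_
      intro r hr
      exact hle2 r (hηpos.trans hr)
    rw [integral_Ioi_rpow_of_lt hq hηpos] at step1
    exact step1
  -- conclude: η^(q+1) ≥ 2^(α-1)
  have hkey : (2:ℝ) ^ (α - 1) ≤ η ^ (q + 1) := by
    have h3' : (1/2) * ((2:ℝ) ^ α * (-(1:ℝ) / (q + 1))) ≤ -η ^ (q + 1) / (q + 1) := by
      calc (1/2) * ((2:ℝ) ^ α * (-(1:ℝ) / (q + 1))) ≤ (1/2) * I :=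
            mul_le_mul_of_nonneg_left hI_lb (by norm_num)
        _ = ∫ r in Set.Ioi η, f r := htail.symm
        _ ≤ -η ^ (q + 1) / (q + 1) := htail_ub
    have e : (2:ℝ) ^ (α - 1) = (1/2) * 2 ^ α := by
      rw [Real.rpow_sub two_pos, Real.rpow_one]; ring
    rw [e]
    have hKne : -(q+1) ≠ 0 := ne_of_gt hK
    have hrw2 : -η ^ (q + 1) / (q + 1) = η ^ (q+1) * ((-(1:ℝ))/(q+1)) := by
      field_simp
    rw [hrw2] at h3'
    have h6 := mul_le_mul_of_nonneg_right h3' hK.le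
    calc (1/2) * (2:ℝ) ^ α
        = (1/2) * ((2:ℝ) ^ α * (-(1:ℝ) / (q + 1))) * -(q+1) := by field_simp
      _ ≤ η ^ (q + 1) * (-(1:ℝ)/(q+1)) * -(q+1) := h6
      _ = η ^ (q + 1) := by field_simp
  -- final bound
  have e2 : (|α| + 1) / |(N : ℝ) + γ + α * β| = (α - 1) / (q + 1) := by
    rw [abs_of_neg hα, ← hq1, abs_of_neg (by linarith : q + 1 < 0)]
    rw [show -α + 1 = -(α - 1) by ring, div_neg, neg_div, neg_neg]
  rw [e2]
  have hbase : (0:ℝ) < (2:ℝ) ^ ((α - 1) / (q + 1)) := Real.rpow_pos_of_pos two_pos _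
  rw [← Real.rpow_le_rpow_iff_of_neg hbase hηpos (by linarith : q + 1 < 0)]
  rw [← Real.rpow_mul (by norm_num : (0:ℝ) ≤ 2), div_mul_cancel₀ _ hq1ne]
  exact hkey
end

section
/- For α < 0 < β and N+γ > 0, N+γ+αβ < 0, the quantity A[m] := sup_{t>m} (∫_t^∞ r^{N-1+γ}(1+r^β)^α dr) (∫_m^t (r^{N-1+γ+q}(1+r^β)^α)^{-1/(q-1)} dr)^{q-1} is finite for every m > 0 and every 1 < q < ∞, as is B[m] := sup_{0<t<m} (∫_0^t r^{N-1+γ}(1+r^β)^α dr) (∫_t^m (r^{N-1+γ+q}(1+r^β)^α)^{-1/(q-1)} dr)^{q-1}. In particular H₂(m) = max{A[m], B[m]} < ∞. -/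
open MeasureTheory Set

private lemma weight_pos {r : ℝ} (hr : 0 < r) (y β z : ℝ) :
    0 < r ^ y * (1 + r ^ β) ^ z := by
  have h := Real.rpow_pos_of_pos hr β
  have h1 : (0 : ℝ) < 1 + r ^ β := by linarith
  have := Real.rpow_pos_of_pos hr y
  have := Real.rpow_pos_of_pos h1 z
  positivity

private lemma weight_contOn (y β z : ℝ) :
    ContinuousOn (fun r : ℝ => r ^ y * (1 + r ^ β) ^ z) (Set.Ioi 0) := by
  have h1 : ContinuousOn (fun r : ℝ => r ^ y) (Set.Ioi 0) :=
    continuousOn_id.rpow_const fun x hx => Or.inl (ne_of_gt hx)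
  have h2 : ContinuousOn (fun r : ℝ => (1 + r ^ β) ^ z) (Set.Ioi 0) := by
    apply ContinuousOn.rpow_const
    · exact continuousOn_const.add (continuousOn_id.rpow_const fun x hx => Or.inl (ne_of_gt hx))
    · intro x hx
      have : 0 < x ^ β := Real.rpow_pos_of_pos hx β
      exact Or.inl (by linarith)
  exact h1.mul h2

private lemma weight_contOn' (y β z w : ℝ) :
    ContinuousOn (fun r : ℝ => (r ^ y * (1 + r ^ β) ^ z) ^ w) (Set.Ioi 0) :=
  (weight_contOn y β z).rpow_const fun x hx => Or.inl (ne_of_gt (weight_pos hx y β z))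

/-- Finiteness of the Muckenhoupt-type quantities `A[m]` and `B[m]` (hence of
`H₂(m) = max{A[m], B[m]}`) associated with the weight `h(r) = r^γ(1+r^β)^α`
in dimension `N`, for every `m > 0` and every `1 < q < ∞`. -/
theorem muckenhoupt_quantities_finite
    (N : ℕ) (q α β γ : ℝ) (hq : 1 < q)
    (hα : α < 0) (hβ : 0 < β)
    (h1 : 0 < (N : ℝ) + γ) (h2 : (N : ℝ) + γ + α * β < 0)
    (m : ℝ) (hm : 0 < m) :
    BddAbove {b : ℝ | ∃ t, m < t ∧
      b = (∫ r in Set.Ioi t, r ^ ((N : ℝ) - 1 + γ) * (1 + r ^ β) ^ α) *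
          (∫ r in Set.Ioc m t,
            (r ^ ((N : ℝ) - 1 + γ + q) * (1 + r ^ β) ^ α) ^ (-(1 / (q - 1)))) ^ (q - 1)} ∧
    BddAbove {b : ℝ | ∃ t, 0 < t ∧ t < m ∧
      b = (∫ r in Set.Ioc 0 t, r ^ ((N : ℝ) - 1 + γ) * (1 + r ^ β) ^ α) *
          (∫ r in Set.Ioc t m,
            (r ^ ((N : ℝ) - 1 + γ + q) * (1 + r ^ β) ^ α) ^ (-(1 / (q - 1)))) ^ (q - 1)} := by
  have hq1 : (0:ℝ) < q - 1 := by linarith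
  have hq1' : q - 1 ≠ 0 := ne_of_gt hq1
  have hc : (0:ℝ) < 1 / (q - 1) := by positivity
  set c : ℝ := 1 / (q - 1) with hc_def
  have hcne : -c ≤ 0 := by linarith
  set s : ℝ := (N : ℝ) + γ + α * β with hs_def
  have hs : s < 0 := h2
  have hsneg : 0 < -s := by linarith
  set A : ℝ := (N : ℝ) - 1 + γ + q with hA_def
  constructor
  · -- First quantity A[m]
    set p : ℝ := (A + β * α) * (-c) with hp_def
    have hp1 : p + 1 = -s * c := by
      rw [hp_def, hA_def, hs_def, hc_def]; field_simp; ring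
    have hp1pos : 0 < p + 1 := by rw [hp1]; positivity
    have hpgt : -1 < p := by linarith
    set D : ℝ := (1 + m ^ (-β)) ^ α with hD_def
    have hDb : 0 < 1 + m ^ (-β) := by
      have := Real.rpow_pos_of_pos hm (-β); linarith
    have hDpos : 0 < D := Real.rpow_pos_of_pos hDb α
    have hDc : 0 < D ^ (-c) := Real.rpow_pos_of_pos hDpos _
    refine ⟨(D ^ (-c) / (p + 1)) ^ (q - 1) * (1 / (-s)), ?_⟩
    rintro b ⟨t, htm, rfl⟩
    have ht0 : 0 < t := hm.trans htm
    -- bound for the outer integral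
    have hf_int_bound : IntegrableOn (fun r : ℝ => r ^ (s - 1)) (Ioi t) :=
      integrableOn_Ioi_rpow_of_lt (by linarith) ht0
    have hfle : ∀ r ∈ Ioi t,
        r ^ ((N : ℝ) - 1 + γ) * (1 + r ^ β) ^ α ≤ r ^ (s - 1) := by
      intro r hr
      have hr0 : 0 < r := ht0.trans hr
      have hrb : 0 < r ^ β := Real.rpow_pos_of_pos hr0 β
      have h1' : (1 + r ^ β) ^ α ≤ r ^ (β * α) := by
        rw [Real.rpow_mul hr0.le]
        exact Real.rpow_le_rpow_of_nonpos hrb (by linarith) hα.le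
      calc r ^ ((N : ℝ) - 1 + γ) * (1 + r ^ β) ^ α
          ≤ r ^ ((N : ℝ) - 1 + γ) * r ^ (β * α) :=
            mul_le_mul_of_nonneg_left h1' (Real.rpow_nonneg hr0.le _)
        _ = r ^ (s - 1) := by
            rw [← Real.rpow_add hr0]; congr 1; rw [hs_def]; ring
    have hf_int : IntegrableOn
        (fun r : ℝ => r ^ ((N : ℝ) - 1 + γ) * (1 + r ^ β) ^ α) (Ioi t) := by
      apply hf_int_bound.mono'
      · exact ((weight_contOn _ β α).mono (Ioi_subset_Ioi ht0.le)).aestronglyMeasurable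
          measurableSet_Ioi
      · refine (ae_restrict_iff' measurableSet_Ioi).2 (Filter.Eventually.of_forall fun r hr => ?_)
        rw [Real.norm_eq_abs, abs_of_nonneg (weight_pos (ht0.trans hr) _ β α).le]
        exact hfle r hr
    have hF : (∫ r in Ioi t, r ^ ((N : ℝ) - 1 + γ) * (1 + r ^ β) ^ α) ≤ t ^ s / (-s) := by
      calc (∫ r in Ioi t, r ^ ((N : ℝ) - 1 + γ) * (1 + r ^ β) ^ α)
          ≤ ∫ r in Ioi t, r ^ (s - 1) :=
            setIntegral_mono_on hf_int hf_int_bound measurableSet_Ioi hfle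
        _ = -t ^ (s - 1 + 1) / (s - 1 + 1) := integral_Ioi_rpow_of_lt (by linarith) ht0
        _ = t ^ s / (-s) := by rw [show s - 1 + 1 = s by ring, div_neg, neg_div]
    have hFnn : 0 ≤ ∫ r in Ioi t, r ^ ((N : ℝ) - 1 + γ) * (1 + r ^ β) ^ α :=
      setIntegral_nonneg measurableSet_Ioi fun r hr => (weight_pos (ht0.trans hr) _ β α).le
    -- bound for the inner integral
    have hGle : ∀ r ∈ Ioc m t,
        (r ^ A * (1 + r ^ β) ^ α) ^ (-c) ≤ D ^ (-c) * r ^ p := by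
      rintro r ⟨hr1, hr2⟩
      have hr0 : 0 < r := hm.trans hr1
      have hrb : 0 < r ^ β := Real.rpow_pos_of_pos hr0 β
      have key : D * r ^ (A + β * α) ≤ r ^ A * (1 + r ^ β) ^ α := by
        have hmb : 0 < m ^ β := Real.rpow_pos_of_pos hm β
        have h1' : (1:ℝ) + r ^ β ≤ (1 + m ^ (-β)) * r ^ β := by
          have hle : m ^ β ≤ r ^ β := Real.rpow_le_rpow hm.le hr1.le hβ.le
          have hone : (1:ℝ) ≤ m ^ (-β) * r ^ β := by
            rw [Real.rpow_neg hm.le]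
            calc (1:ℝ) = (m ^ β)⁻¹ * m ^ β := by field_simp
              _ ≤ (m ^ β)⁻¹ * r ^ β :=
                mul_le_mul_of_nonneg_left hle (inv_nonneg.2 hmb.le)
          nlinarith
        have h2' : ((1 + m ^ (-β)) * r ^ β) ^ α ≤ (1 + r ^ β) ^ α :=
          Real.rpow_le_rpow_of_nonpos (by linarith) h1' hα.le
        have h3' : ((1 + m ^ (-β)) * r ^ β) ^ α = D * r ^ (β * α) := by
          rw [Real.mul_rpow hDb.le hrb.le, hD_def, ← Real.rpow_mul hr0.le]
        calc D * r ^ (A + β * α) = r ^ A * ((1 + m ^ (-β)) * r ^ β) ^ α := by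
              rw [h3', Real.rpow_add hr0]; ring
          _ ≤ r ^ A * (1 + r ^ β) ^ α :=
              mul_le_mul_of_nonneg_left h2' (Real.rpow_nonneg hr0.le A)
      have hbase : 0 < D * r ^ (A + β * α) :=
        mul_pos hDpos (Real.rpow_pos_of_pos hr0 _)
      calc (r ^ A * (1 + r ^ β) ^ α) ^ (-c)
          ≤ (D * r ^ (A + β * α)) ^ (-c) :=
            Real.rpow_le_rpow_of_nonpos hbase key hcne
        _ = D ^ (-c) * r ^ p := by
            rw [Real.mul_rpow hDpos.le (Real.rpow_nonneg hr0.le _),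
              ← Real.rpow_mul hr0.le, hp_def]
    have hsub : Icc m t ⊆ Ioi 0 := fun r hr => lt_of_lt_of_le hm hr.1
    have hg_int : IntegrableOn
        (fun r : ℝ => (r ^ A * (1 + r ^ β) ^ α) ^ (-c)) (Ioc m t) :=
      (((weight_contOn' A β α (-c)).mono hsub).integrableOn_Icc).mono_set Ioc_subset_Icc_self
    have hg_int_bound : IntegrableOn (fun r : ℝ => D ^ (-c) * r ^ p) (Ioc m t) :=
      ((intervalIntegral.intervalIntegrable_rpow' hpgt).1).const_mul _
    have hG : (∫ r in Ioc m t, (r ^ A * (1 + r ^ β) ^ α) ^ (-c))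
        ≤ D ^ (-c) / (p + 1) * t ^ (p + 1) := by
      have hval : (∫ r in Ioc m t, r ^ p) = (t ^ (p + 1) - m ^ (p + 1)) / (p + 1) := by
        rw [← intervalIntegral.integral_of_le htm.le]
        exact integral_rpow (Or.inl hpgt)
      calc (∫ r in Ioc m t, (r ^ A * (1 + r ^ β) ^ α) ^ (-c))
          ≤ ∫ r in Ioc m t, D ^ (-c) * r ^ p :=
            setIntegral_mono_on hg_int hg_int_bound measurableSet_Ioc hGle
        _ = D ^ (-c) * ((t ^ (p + 1) - m ^ (p + 1)) / (p + 1)) := by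
            rw [integral_const_mul, hval]
        _ ≤ D ^ (-c) / (p + 1) * t ^ (p + 1) := by
            have hmp : 0 ≤ m ^ (p + 1) := Real.rpow_nonneg hm.le _
            rw [div_mul_eq_mul_div, mul_div_assoc]
            gcongr
            linarith
    have hGnn : 0 ≤ ∫ r in Ioc m t, (r ^ A * (1 + r ^ β) ^ α) ^ (-c) :=
      setIntegral_nonneg measurableSet_Ioc fun r hr =>
        Real.rpow_nonneg (weight_pos (hm.trans hr.1) _ β α).le _
    have hGbnn : 0 ≤ D ^ (-c) / (p + 1) := by positivity
    -- combine
    calc (∫ r in Ioi t, r ^ ((N : ℝ) - 1 + γ) * (1 + r ^ β) ^ α) *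
          (∫ r in Ioc m t, (r ^ A * (1 + r ^ β) ^ α) ^ (-c)) ^ (q - 1)
        ≤ (t ^ s / (-s)) * (D ^ (-c) / (p + 1) * t ^ (p + 1)) ^ (q - 1) :=
          mul_le_mul hF (Real.rpow_le_rpow hGnn hG hq1.le)
            (Real.rpow_nonneg hGnn _) (by positivity)
      _ = (D ^ (-c) / (p + 1)) ^ (q - 1) * (1 / (-s)) := by
          rw [Real.mul_rpow hGbnn (Real.rpow_nonneg ht0.le _), ← Real.rpow_mul ht0.le]
          have hps : (p + 1) * (q - 1) = -s := by
            rw [hp1, hc_def]; field_simp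
          rw [hps]
          have htss : t ^ s * t ^ (-s) = 1 := by
            rw [← Real.rpow_add ht0]; simp
          calc t ^ s / (-s) * ((D ^ (-c) / (p + 1)) ^ (q - 1) * t ^ (-s))
              = (t ^ s * t ^ (-s)) * ((D ^ (-c) / (p + 1)) ^ (q - 1) * (1 / (-s))) := by
                ring
            _ = (D ^ (-c) / (p + 1)) ^ (q - 1) * (1 / (-s)) := by rw [htss, one_mul]
  · -- Second quantity B[m]
    set e : ℝ := A * (-c) with he_def
    have he1 : e + 1 = -((N : ℝ) + γ) * c := by
      rw [he_def, hA_def, hc_def]; field_simp; ring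
    have he1neg : e + 1 < 0 := by
      rw [he1]
      have := mul_pos h1 hc
      nlinarith
    have he1pos : 0 < -(e + 1) := by linarith
    set E : ℝ := (1 + m ^ β) ^ α with hE_def
    have hEb : 0 < 1 + m ^ β := by
      have := Real.rpow_pos_of_pos hm β; linarith
    have hEpos : 0 < E := Real.rpow_pos_of_pos hEb α
    have hEc : 0 < E ^ (-c) := Real.rpow_pos_of_pos hEpos _
    refine ⟨(1 / ((N : ℝ) + γ)) * (E ^ (-c) / (-(e + 1))) ^ (q - 1), ?_⟩
    rintro b ⟨t, ht0, htm, rfl⟩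
    -- bound for the outer integral
    have hf_int_bound : IntegrableOn (fun r : ℝ => r ^ ((N : ℝ) - 1 + γ)) (Ioc 0 t) :=
      (intervalIntegral.intervalIntegrable_rpow' (by linarith)).1
    have hfle : ∀ r ∈ Ioc 0 t,
        r ^ ((N : ℝ) - 1 + γ) * (1 + r ^ β) ^ α ≤ r ^ ((N : ℝ) - 1 + γ) := by
      rintro r ⟨hr0, hrt⟩
      have hb : (1:ℝ) ≤ 1 + r ^ β := by
        have := Real.rpow_pos_of_pos hr0 β; linarith
      have h' : (1 + r ^ β) ^ α ≤ 1 := Real.rpow_le_one_of_one_le_of_nonpos hb hα.le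
      calc r ^ ((N : ℝ) - 1 + γ) * (1 + r ^ β) ^ α
          ≤ r ^ ((N : ℝ) - 1 + γ) * 1 :=
            mul_le_mul_of_nonneg_left h' (Real.rpow_nonneg hr0.le _)
        _ = r ^ ((N : ℝ) - 1 + γ) := mul_one _
    have hf_int : IntegrableOn
        (fun r : ℝ => r ^ ((N : ℝ) - 1 + γ) * (1 + r ^ β) ^ α) (Ioc 0 t) := by
      apply hf_int_bound.mono'
      · exact ((weight_contOn _ β α).mono (fun r hr => hr.1)).aestronglyMeasurable
          measurableSet_Ioc
      · refine (ae_restrict_iff' measurableSet_Ioc).2 (Filter.Eventually.of_forall fun r hr => ?_)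
        rw [Real.norm_eq_abs, abs_of_nonneg (weight_pos hr.1 _ β α).le]
        exact hfle r hr
    have hF : (∫ r in Ioc 0 t, r ^ ((N : ℝ) - 1 + γ) * (1 + r ^ β) ^ α)
        ≤ t ^ ((N : ℝ) + γ) / ((N : ℝ) + γ) := by
      calc (∫ r in Ioc 0 t, r ^ ((N : ℝ) - 1 + γ) * (1 + r ^ β) ^ α)
          ≤ ∫ r in Ioc 0 t, r ^ ((N : ℝ) - 1 + γ) :=
            setIntegral_mono_on hf_int hf_int_bound measurableSet_Ioc hfle
        _ = (t ^ ((N : ℝ) - 1 + γ + 1) - (0:ℝ) ^ ((N : ℝ) - 1 + γ + 1)) /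
              ((N : ℝ) - 1 + γ + 1) := by
            rw [← intervalIntegral.integral_of_le ht0.le]
            exact integral_rpow (Or.inl (by linarith))
        _ = t ^ ((N : ℝ) + γ) / ((N : ℝ) + γ) := by
            rw [show (N : ℝ) - 1 + γ + 1 = (N : ℝ) + γ by ring, Real.zero_rpow h1.ne']
            ring
    have hFnn : 0 ≤ ∫ r in Ioc 0 t, r ^ ((N : ℝ) - 1 + γ) * (1 + r ^ β) ^ α :=
      setIntegral_nonneg measurableSet_Ioc fun r hr => (weight_pos hr.1 _ β α).le
    -- bound for the inner integral
    have hGle : ∀ r ∈ Ioc t m,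
        (r ^ A * (1 + r ^ β) ^ α) ^ (-c) ≤ E ^ (-c) * r ^ e := by
      rintro r ⟨hr1, hr2⟩
      have hr0 : 0 < r := ht0.trans hr1
      have key : E * r ^ A ≤ r ^ A * (1 + r ^ β) ^ α := by
        have hle : r ^ β ≤ m ^ β := Real.rpow_le_rpow hr0.le hr2 hβ.le
        have hrb : 0 < r ^ β := Real.rpow_pos_of_pos hr0 β
        have h2' : (1 + m ^ β) ^ α ≤ (1 + r ^ β) ^ α :=
          Real.rpow_le_rpow_of_nonpos (by linarith) (by linarith) hα.le
        calc E * r ^ A = r ^ A * (1 + m ^ β) ^ α := by rw [hE_def]; ring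
          _ ≤ r ^ A * (1 + r ^ β) ^ α :=
            mul_le_mul_of_nonneg_left h2' (Real.rpow_nonneg hr0.le A)
      have hbase : 0 < E * r ^ A := mul_pos hEpos (Real.rpow_pos_of_pos hr0 A)
      calc (r ^ A * (1 + r ^ β) ^ α) ^ (-c)
          ≤ (E * r ^ A) ^ (-c) := Real.rpow_le_rpow_of_nonpos hbase key hcne
        _ = E ^ (-c) * r ^ e := by
            rw [Real.mul_rpow hEpos.le (Real.rpow_nonneg hr0.le _),
              ← Real.rpow_mul hr0.le, he_def]
    have hsub : Icc t m ⊆ Ioi 0 := fun r hr => lt_of_lt_of_le ht0 hr.1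
    have hg_int : IntegrableOn
        (fun r : ℝ => (r ^ A * (1 + r ^ β) ^ α) ^ (-c)) (Ioc t m) :=
      (((weight_contOn' A β α (-c)).mono hsub).integrableOn_Icc).mono_set Ioc_subset_Icc_self
    have hg_int_bound : IntegrableOn (fun r : ℝ => E ^ (-c) * r ^ e) (Ioc t m) := by
      apply Integrable.const_mul
      exact ((continuousOn_id.rpow_const fun x hx =>
        Or.inl (ne_of_gt (hsub hx))).integrableOn_Icc).mono_set Ioc_subset_Icc_self
    have hG : (∫ r in Ioc t m, (r ^ A * (1 + r ^ β) ^ α) ^ (-c))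
        ≤ E ^ (-c) / (-(e + 1)) * t ^ (e + 1) := by
      have hval : (∫ r in Ioc t m, r ^ e) = (m ^ (e + 1) - t ^ (e + 1)) / (e + 1) := by
        rw [← intervalIntegral.integral_of_le htm.le]
        refine integral_rpow (Or.inr ⟨by linarith, ?_⟩)
        rw [uIcc_of_le htm.le]
        exact fun h0 => absurd (mem_Icc.1 h0).1 (not_le.2 ht0)
      calc (∫ r in Ioc t m, (r ^ A * (1 + r ^ β) ^ α) ^ (-c))
          ≤ ∫ r in Ioc t m, E ^ (-c) * r ^ e :=
            setIntegral_mono_on hg_int hg_int_bound measurableSet_Ioc hGle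
        _ = E ^ (-c) * ((m ^ (e + 1) - t ^ (e + 1)) / (e + 1)) := by
            rw [integral_const_mul, hval]
        _ ≤ E ^ (-c) / (-(e + 1)) * t ^ (e + 1) := by
            have hmp : 0 ≤ m ^ (e + 1) := Real.rpow_nonneg hm.le _
            rw [show (m ^ (e + 1) - t ^ (e + 1)) / (e + 1)
                = (t ^ (e + 1) - m ^ (e + 1)) / (-(e + 1)) by
              rw [← neg_div_neg_eq, neg_sub]]
            rw [div_mul_eq_mul_div, mul_div_assoc]
            gcongr
            linarith
    have hGnn : 0 ≤ ∫ r in Ioc t m, (r ^ A * (1 + r ^ β) ^ α) ^ (-c) :=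
      setIntegral_nonneg measurableSet_Ioc fun r hr =>
        Real.rpow_nonneg (weight_pos (ht0.trans hr.1) _ β α).le _
    have hGbnn : 0 ≤ E ^ (-c) / (-(e + 1)) := by positivity
    -- combine
    calc (∫ r in Ioc 0 t, r ^ ((N : ℝ) - 1 + γ) * (1 + r ^ β) ^ α) *
          (∫ r in Ioc t m, (r ^ A * (1 + r ^ β) ^ α) ^ (-c)) ^ (q - 1)
        ≤ (t ^ ((N : ℝ) + γ) / ((N : ℝ) + γ)) *
            (E ^ (-c) / (-(e + 1)) * t ^ (e + 1)) ^ (q - 1) :=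
          mul_le_mul hF (Real.rpow_le_rpow hGnn hG hq1.le)
            (Real.rpow_nonneg hGnn _) (by positivity)
      _ = (1 / ((N : ℝ) + γ)) * (E ^ (-c) / (-(e + 1))) ^ (q - 1) := by
          rw [Real.mul_rpow hGbnn (Real.rpow_nonneg ht0.le _), ← Real.rpow_mul ht0.le]
          have hes : (e + 1) * (q - 1) = -((N : ℝ) + γ) := by
            rw [he1, hc_def]; field_simp
          rw [hes]
          have htss : t ^ ((N : ℝ) + γ) * t ^ (-((N : ℝ) + γ)) = 1 := by
            rw [← Real.rpow_add ht0, add_neg_cancel, Real.rpow_zero]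
          calc t ^ ((N : ℝ) + γ) / ((N : ℝ) + γ) *
                ((E ^ (-c) / (-(e + 1))) ^ (q - 1) * t ^ (-((N : ℝ) + γ)))
              = (t ^ ((N : ℝ) + γ) * t ^ (-((N : ℝ) + γ))) *
                  ((1 / ((N : ℝ) + γ)) * (E ^ (-c) / (-(e + 1))) ^ (q - 1)) := by ring
            _ = (1 / ((N : ℝ) + γ)) * (E ^ (-c) / (-(e + 1))) ^ (q - 1) := by
                rw [htss, one_mul]
end
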